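/- arXiv:0803.0630 — 2 statements merged into one kernel-verified Lean document; each statement's English description precedes it below -/
import Mathlib

section
/- Let m be a binary operation on pairs (κ, p) with κ a positive rational credence and p a real probability, which is commutative and associative, and which satisfies: for every n ≥ 1, every positive rational κ, and all reals p₁, …, pₙ, the n-fold merger of [κ; p₁], [κ; p₂], …, [κ; pₙ] equals [nκ; (1/n)(p₁ + ⋯ + pₙ)]. Then for all positive rationals κ₁, …, κₙ and reals p₁, …, pₙ, the merger of [κ₁; p₁], …, [κₙ; pₙ] equals [κ₁ + ⋯ + κₙ; (κ₁p₁ + ⋯ + κₙpₙ)/(κ₁ + ⋯ + κₙ)]. -/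
/-!
Two positive rational credences are multiples `a * u`, `b * u` of a common unit `u` with `a, b`
positive integers. By the postulate with a constant probability, `[a u; p]` is the merger of `a`
copies of `[u; p]`, so by associativity the merger of `[a u; p]` with `[b u; q]` is the merger of
`a + b` equi-credible evidences, which the postulate evaluates to the credence-weighted mean. The
`n`-ary rule then follows from the binary one by folding along the list.
-/

/-- The merger of a first evidence `e` with a further list of evidences `l`,
obtained by successively applying the binary merger operation `m`. -/
def mergeList (m : ℚ × ℝ → ℚ × ℝ → ℚ × ℝ) (e : ℚ × ℝ) (l : List (ℚ × ℝ)) : ℚ × ℝ :=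
  l.foldl m e

theorem Rat.exists_nat_mul_eq_of_pos {κ₁ κ₂ : ℚ} (h₁ : 0 < κ₁) (h₂ : 0 < κ₂) :
    ∃ u > 0, ∃ a b : ℕ, 0 < a ∧ 0 < b ∧ κ₁ = a * u ∧ κ₂ = b * u := by
  have natAbs_num {κ : ℚ} (h : 0 < κ) : (κ.num.natAbs : ℚ) = κ * κ.den := by
    rw [Nat.cast_natAbs, Int.cast_abs, abs_of_pos (Int.cast_pos.2 (Rat.num_pos.2 h)),
      Rat.mul_den_eq_num]
  refine ⟨1 / (κ₁.den * κ₂.den), by positivity, κ₁.num.natAbs * κ₂.den,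
    κ₂.num.natAbs * κ₁.den, by positivity, by positivity, ?_, ?_⟩
  · push_cast
    rw [natAbs_num h₁]
    field_simp
  · push_cast
    rw [natAbs_num h₂]
    field_simp

section Merger

variable {m : ℚ × ℝ → ℚ × ℝ → ℚ × ℝ}

theorem mergeList_append_cons [Std.Associative m] (e e' : ℚ × ℝ) (l₁ l₂ : List (ℚ × ℝ)) :
    mergeList m e (l₁ ++ e' :: l₂) = m (mergeList m e l₁) (mergeList m e' l₂) := by
  simp only [mergeList, List.foldl_append, List.foldl_cons, List.foldl_assoc]

/-- The paper's postulate (3.2). -/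
def AveragesEquicredible (m : ℚ × ℝ → ℚ × ℝ → ℚ × ℝ) : Prop :=
  ∀ (n : ℕ) (κ : ℚ), 0 < κ → ∀ p : Fin (n + 1) → ℝ,
    mergeList m (κ, p 0) (List.ofFn fun i : Fin n => (κ, p i.succ)) =
      (((n : ℚ) + 1) * κ, (∑ i, p i) / ((n : ℝ) + 1))

namespace AveragesEquicredible

theorem mergeList_map (h : AveragesEquicredible m) {κ : ℚ} (hκ : 0 < κ) (x : ℝ) (xs : List ℝ) :
    mergeList m (κ, x) (xs.map (κ, ·)) =
      ((xs.length + 1 : ℚ) * κ, (x :: xs).sum / (xs.length + 1 : ℝ)) := by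
  simpa [List.ofFn_getElem_eq_map, ← List.sum_ofFn] using h xs.length κ hκ (x :: xs).get

theorem mergeList_replicate (h : AveragesEquicredible m) {κ : ℚ} (hκ : 0 < κ) (x : ℝ) (n : ℕ) :
    mergeList m (κ, x) (List.replicate n (κ, x)) = ((n + 1 : ℚ) * κ, x) := by
  have := h.mergeList_map hκ x (List.replicate n x)
  simp only [List.map_replicate, List.length_replicate] at this
  rw [this, ← List.replicate_succ, List.sum_replicate, nsmul_eq_mul]
  congr 1
  field_simp
  push_cast
  ring

theorem merge_nat_mul [Std.Associative m] (h : AveragesEquicredible m) {u : ℚ} (hu : 0 < u)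
    {a b : ℕ} (ha : 0 < a) (hb : 0 < b) (p q : ℝ) :
    m (a * u, p) (b * u, q) = ((a + b) * u, (a * p + b * q) / (a + b)) := by
  obtain ⟨a, rfl⟩ := Nat.exists_eq_add_one_of_ne_zero ha.ne'
  obtain ⟨b, rfl⟩ := Nat.exists_eq_add_one_of_ne_zero hb.ne'
  push_cast
  rw [← h.mergeList_replicate hu, ← h.mergeList_replicate hu, ← mergeList_append_cons (m := m),
    ← List.map_replicate, ← List.map_replicate, ← List.map_cons, ← List.map_append,
    h.mergeList_map hu]
  simp only [List.length_append, List.length_replicate, List.length_cons, List.sum_cons,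
    List.sum_append, List.sum_replicate, nsmul_eq_mul]
  congr 1 <;> push_cast <;> ring

theorem merge_eq_weighted_mean [Std.Associative m] (h : AveragesEquicredible m) {κ₁ κ₂ : ℚ}
    (h₁ : 0 < κ₁) (h₂ : 0 < κ₂) (p₁ p₂ : ℝ) :
    m (κ₁, p₁) (κ₂, p₂) = (κ₁ + κ₂, (κ₁ * p₁ + κ₂ * p₂) / ((κ₁ + κ₂ : ℚ) : ℝ)) := by
  obtain ⟨u, hu, a, b, ha, hb, rfl, rfl⟩ := Rat.exists_nat_mul_eq_of_pos h₁ h₂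
  rw [h.merge_nat_mul hu ha hb]
  have : (u : ℝ) ≠ 0 := by positivity
  congr 1
  · ring
  · push_cast
    field_simp

theorem mergeList_eq_weighted_mean [Std.Associative m] (h : AveragesEquicredible m) {κ : ℚ}
    (hκ : 0 < κ) (x : ℝ) (l : List (ℚ × ℝ)) (hl : ∀ e ∈ l, 0 < e.1) :
    mergeList m (κ, x) l = (κ + (l.map Prod.fst).sum,
      (κ * x + (l.map fun e => (e.1 : ℝ) * e.2).sum) / ((κ + (l.map Prod.fst).sum : ℚ) : ℝ)) := by
  induction l generalizing κ x with
  | nil => simp [mergeList, mul_div_cancel_left₀ x (Rat.cast_pos.2 hκ).ne']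
  | cons e l ih =>
    have he : 0 < e.1 := hl e List.mem_cons_self
    have hsum : (0 : ℝ) < κ + e.1 := by exact_mod_cast add_pos hκ he
    rw [mergeList, List.foldl_cons, h.merge_eq_weighted_mean hκ he, ← mergeList,
      ih (add_pos hκ he) _ fun e' he' => hl e' (List.mem_cons_of_mem e he')]
    push_cast
    rw [mul_div_cancel₀ _ hsum.ne']
    simp only [List.map_cons, List.sum_cons, add_assoc]

end AveragesEquicredible

end Merger

theorem straight_merger_rule_from_equicredible_postulate_general
    (m : ℚ × ℝ → ℚ × ℝ → ℚ × ℝ)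
    (hassoc : ∀ e₁ e₂ e₃, m (m e₁ e₂) e₃ = m e₁ (m e₂ e₃))
    (hequi : ∀ (n : ℕ) (κ : ℚ), 0 < κ → ∀ p : Fin (n + 1) → ℝ,
      mergeList m (κ, p 0) (List.ofFn fun i : Fin n => (κ, p i.succ)) =
        (((n : ℚ) + 1) * κ, (∑ i, p i) / ((n : ℝ) + 1))) :
    ∀ (n : ℕ) (κ : Fin (n + 1) → ℚ) (p : Fin (n + 1) → ℝ), (∀ i, 0 < κ i) →
      mergeList m (κ 0, p 0) (List.ofFn fun i : Fin n => (κ i.succ, p i.succ)) =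
        (∑ i, κ i, (∑ i, (κ i : ℝ) * p i) / ((∑ i, κ i : ℚ) : ℝ)) := by
  intro n κ p hκ
  have : Std.Associative m := ⟨hassoc⟩
  rw [AveragesEquicredible.mergeList_eq_weighted_mean hequi (hκ 0) _ _
    (by simp [List.mem_ofFn, hκ])]
  simp only [List.map_ofFn, Function.comp_def, List.sum_ofFn, Fin.sum_univ_succ]

/-- If a commutative and associative merger operation on evidences `[κ; p]`
(credence `κ` a positive rational, probability `p` a real) merges any `n ≥ 1`
equi-credible evidences `[κ; p₁], …, [κ; pₙ]` into `[nκ; (1/n)∑pᵢ]`, then it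
merges arbitrary evidences `[κ₁; p₁], …, [κₙ; pₙ]` with positive rational
credences into `[∑κᵢ; (∑κᵢpᵢ)/(∑κᵢ)]`. -/
theorem straight_merger_rule_from_equicredible_postulate
    (m : ℚ × ℝ → ℚ × ℝ → ℚ × ℝ)
    (hcomm : ∀ e₁ e₂, m e₁ e₂ = m e₂ e₁)
    (hassoc : ∀ e₁ e₂ e₃, m (m e₁ e₂) e₃ = m e₁ (m e₂ e₃))
    (hequi : ∀ (n : ℕ) (κ : ℚ), 0 < κ → ∀ p : Fin (n + 1) → ℝ,
      mergeList m (κ, p 0) (List.ofFn fun i : Fin n => (κ, p i.succ)) =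
        (((n : ℚ) + 1) * κ, (∑ i, p i) / ((n : ℝ) + 1))) :
    ∀ (n : ℕ) (κ : Fin (n + 1) → ℚ) (p : Fin (n + 1) → ℝ), (∀ i, 0 < κ i) →
      mergeList m (κ 0, p 0) (List.ofFn fun i : Fin n => (κ i.succ, p i.succ)) =
        (∑ i, κ i, (∑ i, (κ i : ℝ) * p i) / ((∑ i, κ i : ℚ) : ℝ)) :=
  straight_merger_rule_from_equicredible_postulate_general m hassoc hequi
end

section
/- Fix a ∈ (0,1). For b ∈ (0,1) and c ∈ ℝ with 0 ≤ c ≤ b, define ρ(a,b,c) = (c − ab)/√(a(1−a)b(1−b)). Then ρ(a,b,c) tends to 0 as b tends to 0 from above, uniformly in c: for every ε > 0 there exists δ > 0 such that for all b ∈ (0, δ) and all c with 0 ≤ c ≤ b, |ρ(a,b,c)| < ε. -/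
open Filter Topology

/-! The numerator satisfies `|c - ab| ≤ b`, while the denominator is `√b` times a quantity bounded
away from `0`; hence `|ρ(a,b,c)| ≤ √(b / (a(1-a)(1-b)))`, uniformly in `c`, and this bound is
continuous at `b = 0` with value `0`. -/

theorem abs_sub_mul_le_of_le {a b c : ℝ} (ha₀ : 0 ≤ a) (ha₁ : a ≤ 1) (hc : 0 ≤ c) (hcb : c ≤ b) :
    |c - a * b| ≤ b := by
  rw [abs_le]
  constructor <;> nlinarith

theorem div_sqrt_mul_eq_sqrt_div {b : ℝ} (hb : 0 ≤ b) (d : ℝ) : b / √(b * d) = √(b / d) := by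
  rw [Real.sqrt_mul hb, ← div_div, Real.div_sqrt, Real.sqrt_div hb]

theorem abs_div_sqrt_mul_le {x b d : ℝ} (hb : 0 ≤ b) (hx : |x| ≤ b) :
    |x / √(b * d)| ≤ √(b / d) := by
  rw [abs_div, abs_of_nonneg (Real.sqrt_nonneg _), ← div_sqrt_mul_eq_sqrt_div hb]
  exact div_le_div_of_nonneg_right hx (Real.sqrt_nonneg _)

theorem abs_corr_le {a b c : ℝ} (ha : a ∈ Set.Icc (0 : ℝ) 1) (hc : 0 ≤ c) (hcb : c ≤ b) :
    |(c - a * b) / √(a * (1 - a) * b * (1 - b))| ≤ √(b / (a * (1 - a) * (1 - b))) := by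
  rw [show a * (1 - a) * b * (1 - b) = b * (a * (1 - a) * (1 - b)) by ring]
  exact abs_div_sqrt_mul_le (hc.trans hcb) (abs_sub_mul_le_of_le ha.1 ha.2 hc hcb)

theorem tendsto_sqrt_div_nhds_zero {K : ℝ} (hK : K ≠ 0) :
    Tendsto (fun b : ℝ => √(b / (K * (1 - b)))) (𝓝 0) (𝓝 0) := by
  have hcont : ContinuousAt (fun b : ℝ => √(b / (K * (1 - b)))) 0 := by
    fun_prop (disch := simpa using hK)
  simpa using hcont.tendsto

/-- With `a ∈ (0,1)` fixed, the correlation coefficient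
`ρ(a,b,c) = (c − ab)/√(a(1−a)b(1−b))` tends to `0` as `b → 0⁺`, uniformly over
all `c` with `0 ≤ c ≤ b`. -/
theorem corr_tendsto_zero_as_prob_tendsto_zero
    (a : ℝ) (ha : a ∈ Set.Ioo (0 : ℝ) 1) :
    ∀ ε > (0 : ℝ), ∃ δ > (0 : ℝ), ∀ b : ℝ, 0 < b → b < δ → b < 1 →
      ∀ c : ℝ, 0 ≤ c → c ≤ b →
        |(c - a * b) / Real.sqrt (a * (1 - a) * b * (1 - b))| < ε := by
  intro ε hε
  have hK : a * (1 - a) ≠ 0 := (mul_pos ha.1 (sub_pos.2 ha.2)).ne'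
  obtain ⟨δ, hδ, hnear⟩ := Metric.eventually_nhds_iff.1
    ((tendsto_sqrt_div_nhds_zero hK).eventually (gt_mem_nhds hε))
  refine ⟨δ, hδ, fun b hb hbδ _ c hc hcb => ?_⟩
  have hbound : √(b / (a * (1 - a) * (1 - b))) < ε :=
    hnear (by rwa [Real.dist_eq, sub_zero, abs_of_pos hb])
  exact (abs_corr_le (Set.Ioo_subset_Icc_self ha) hc hcb).trans_lt hbound
end
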